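/- Fix x ∈ ℝ and A > 0, and define g : (0, ∞) → ℝ by g(τ) = A·exp(τ²/2 − τ·x)·Φ(x − τ). Then g is strictly decreasing on (0, ∞), with lim_{τ→0⁺} g(τ) = A·Φ(x) and lim_{τ→∞} g(τ) = 0. -/

import Mathlib

open Real Filter

/-- The standard normal density `φ(u) = (2π)^{-1/2} exp(-u²/2)`. -/
noncomputable def stdNormalPDF (u : ℝ) : ℝ := (Real.sqrt (2 * Real.pi))⁻¹ * Real.exp (-u ^ 2 / 2)

/-- The standard normal cumulative distribution function `Φ`. -/
noncomputable def stdNormalCDF (x : ℝ) : ℝ := ∫ u in Set.Iic x, stdNormalPDF u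

open MeasureTheory Set

lemma stdNormalPDF_pos (u : ℝ) : 0 < stdNormalPDF u := by
  unfold stdNormalPDF
  positivity

lemma stdNormalPDF_continuous : Continuous stdNormalPDF := by
  unfold stdNormalPDF
  continuity

lemma stdNormalPDF_integrable : Integrable stdNormalPDF := by
  have h : Integrable (fun u : ℝ => Real.exp (-(1/2) * u ^ 2)) :=
    integrable_exp_neg_mul_sq (by norm_num)
  have := h.const_mul (Real.sqrt (2 * Real.pi))⁻¹
  refine this.congr ?_
  filter_upwards with u
  unfold stdNormalPDF
  ring_nf

lemma stdNormalPDF_hasDerivAt (u : ℝ) :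
    HasDerivAt stdNormalPDF (-u * stdNormalPDF u) u := by
  have h1 : HasDerivAt (fun u : ℝ => -u ^ 2 / 2) (-u) u := by
    have := ((hasDerivAt_pow 2 u).neg.div_const 2)
    refine this.congr_deriv ?_
    ring
  have h2 := h1.exp
  have := h2.const_mul (Real.sqrt (2 * Real.pi))⁻¹
  refine this.congr_deriv ?_
  unfold stdNormalPDF
  ring

lemma neg_mul_pdf_integrable : Integrable (fun u : ℝ => -u * stdNormalPDF u) := by
  have h : Integrable (fun u : ℝ => u * Real.exp (-(1/2) * u ^ 2)) := by
    have := integrable_mul_exp_neg_mul_sq (b := 1/2) (by norm_num)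
    refine this.congr ?_
    filter_upwards with u
    rw [sq]
  have := (h.const_mul (-(Real.sqrt (2 * Real.pi))⁻¹))
  refine this.congr ?_
  filter_upwards with u
  unfold stdNormalPDF
  ring_nf

lemma stdNormalPDF_tendsto_atBot : Tendsto stdNormalPDF atBot (nhds 0) := by
  have h1 : Tendsto (fun u : ℝ => -u ^ 2 / 2) atBot atBot := by
    refine tendsto_atBot_mono' atBot ?_ tendsto_id
    filter_upwards [eventually_le_atBot (-2 : ℝ)] with u hu
    simp only [id_eq]
    nlinarith
  have h2 : Tendsto (fun u : ℝ => Real.exp (-u ^ 2 / 2)) atBot (nhds 0) :=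
    Real.tendsto_exp_atBot.comp h1
  have := h2.const_mul (Real.sqrt (2 * Real.pi))⁻¹
  rw [mul_zero] at this
  exact this

lemma integral_neg_mul_pdf (a : ℝ) :
    ∫ u in Iic a, -u * stdNormalPDF u = stdNormalPDF a := by
  have := integral_Iic_of_hasDerivAt_of_tendsto' (a := a) (m := 0)
    (fun u _ => stdNormalPDF_hasDerivAt u)
    (neg_mul_pdf_integrable.integrableOn) stdNormalPDF_tendsto_atBot
  simpa using this

lemma stdNormalCDF_nonneg (t : ℝ) : 0 ≤ stdNormalCDF t :=
  setIntegral_nonneg measurableSet_Iic (fun u _ => (stdNormalPDF_pos u).le)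

/-- Strict Mills-type inequality: `a·Φ(-a) < φ(-a)` for all real `a`. -/
lemma mills (a : ℝ) : a * stdNormalCDF (-a) < stdNormalPDF (-a) := by
  rcases le_or_gt a 0 with ha | ha
  · calc a * stdNormalCDF (-a) ≤ 0 := mul_nonpos_of_nonpos_of_nonneg ha (stdNormalCDF_nonneg _)
    _ < _ := stdNormalPDF_pos _
  · have hkey : ∫ u in Iic (-a), -u * stdNormalPDF u = stdNormalPDF (-a) :=
      integral_neg_mul_pdf (-a)
    have hmul : a * stdNormalCDF (-a) = ∫ u in Iic (-a), a * stdNormalPDF u := by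
      rw [stdNormalCDF, ← integral_const_mul]
    have hdiffpos : 0 < ∫ u in Iic (-a), (-u * stdNormalPDF u - a * stdNormalPDF u) := by
      rw [setIntegral_pos_iff_support_of_nonneg_ae]
      · have hsub : Iio (-a) ⊆ Function.support
            (fun u => -u * stdNormalPDF u - a * stdNormalPDF u) ∩ Iic (-a) := by
          intro u hu
          have hu' : u < -a := hu
          constructor
          · have : 0 < -u * stdNormalPDF u - a * stdNormalPDF u := by
              have : a < -u := by linarith
              nlinarith [stdNormalPDF_pos u]
            exact ne_of_gt this
          · exact le_of_lt hu'
        have : (0 : ENNReal) < volume (Iio (-a)) := by simp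
        exact lt_of_lt_of_le this (measure_mono hsub)
      · filter_upwards [ae_restrict_mem measurableSet_Iic] with u hu
        simp only [Pi.zero_apply]
        have : a ≤ -u := by
          have : u ≤ -a := hu
          linarith
        nlinarith [stdNormalPDF_pos u]
      · exact (neg_mul_pdf_integrable.integrableOn).sub
          ((stdNormalPDF_integrable.integrableOn).const_mul a)
    rw [integral_sub (neg_mul_pdf_integrable.integrableOn)
      ((stdNormalPDF_integrable.integrableOn).const_mul a), hkey] at hdiffpos
    rw [hmul]
    linarith

lemma stdNormalCDF_hasDerivAt (y : ℝ) :
    HasDerivAt stdNormalCDF (stdNormalPDF y) y := by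
  have heq : ∀ t : ℝ, stdNormalCDF t = stdNormalCDF 0 + ∫ u in (0:ℝ)..t, stdNormalPDF u := by
    intro t
    have := intervalIntegral.integral_Iic_sub_Iic (μ := volume) (f := stdNormalPDF) (a := (0:ℝ)) (b := t)
      stdNormalPDF_integrable.integrableOn stdNormalPDF_integrable.integrableOn
    unfold stdNormalCDF
    linarith
  have hint : HasDerivAt (fun t : ℝ => ∫ u in (0:ℝ)..t, stdNormalPDF u) (stdNormalPDF y) y := by
    refine intervalIntegral.integral_hasDerivAt_right
      stdNormalPDF_integrable.intervalIntegrable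
      stdNormalPDF_continuous.stronglyMeasurable.stronglyMeasurableAtFilter
      stdNormalPDF_continuous.continuousAt
  have := (hint.const_add (stdNormalCDF 0))
  refine this.congr_of_eventuallyEq ?_
  filter_upwards with t
  exact heq t

lemma g_hasDerivAt (x A : ℝ) (τ : ℝ) :
    HasDerivAt (fun τ : ℝ => A * Real.exp (τ ^ 2 / 2 - τ * x) * stdNormalCDF (x - τ))
      (A * Real.exp (τ ^ 2 / 2 - τ * x) *
        ((τ - x) * stdNormalCDF (x - τ) - stdNormalPDF (x - τ))) τ := by
  have h1 : HasDerivAt (fun τ : ℝ => τ ^ 2 / 2 - τ * x) (τ - x) τ := by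
    have := ((hasDerivAt_pow 2 τ).div_const 2).sub ((hasDerivAt_id τ).mul_const x)
    refine this.congr_deriv ?_
    ring
  have h2 : HasDerivAt (fun τ : ℝ => A * Real.exp (τ ^ 2 / 2 - τ * x))
      (A * (Real.exp (τ ^ 2 / 2 - τ * x) * (τ - x))) τ := (h1.exp).const_mul A
  have h3 : HasDerivAt (fun τ : ℝ => stdNormalCDF (x - τ)) (-stdNormalPDF (x - τ)) τ := by
    have hlin : HasDerivAt (fun τ : ℝ => x - τ) (-1) τ := by
      simpa using (hasDerivAt_id τ).const_sub x
    have := (stdNormalCDF_hasDerivAt (x - τ)).comp τ hlin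
    exact this.congr_deriv (by ring)
  have := h2.mul h3
  refine this.congr_deriv ?_
  ring

lemma g_deriv_neg (x A : ℝ) (hA : 0 < A) (τ : ℝ) :
    A * Real.exp (τ ^ 2 / 2 - τ * x) *
      ((τ - x) * stdNormalCDF (x - τ) - stdNormalPDF (x - τ)) < 0 := by
  have hm := mills (τ - x)
  rw [show -(τ - x) = x - τ by ring] at hm
  have hpos : 0 < A * Real.exp (τ ^ 2 / 2 - τ * x) := by positivity
  have : (τ - x) * stdNormalCDF (x - τ) - stdNormalPDF (x - τ) < 0 := by linarith
  exact mul_neg_of_pos_of_neg hpos this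

/-- For fixed `x ∈ ℝ` and `A > 0`, the function `g(τ) = A·exp(τ²/2 - τ·x)·Φ(x - τ)` is
strictly decreasing on `(0, ∞)`, with `lim_{τ→0⁺} g(τ) = A·Φ(x)` and
`lim_{τ→∞} g(τ) = 0`. -/
theorem g_strictAnti_and_limits (x A : ℝ) (hA : 0 < A) :
    StrictAntiOn (fun τ : ℝ => A * Real.exp (τ ^ 2 / 2 - τ * x) * stdNormalCDF (x - τ))
        (Set.Ioi (0 : ℝ)) ∧
    Tendsto (fun τ : ℝ => A * Real.exp (τ ^ 2 / 2 - τ * x) * stdNormalCDF (x - τ))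
        (nhdsWithin 0 (Set.Ioi 0)) (nhds (A * stdNormalCDF x)) ∧
    Tendsto (fun τ : ℝ => A * Real.exp (τ ^ 2 / 2 - τ * x) * stdNormalCDF (x - τ))
        atTop (nhds 0) := by
  set g : ℝ → ℝ := fun τ => A * Real.exp (τ ^ 2 / 2 - τ * x) * stdNormalCDF (x - τ) with hg
  refine ⟨?_, ?_, ?_⟩
  · refine strictAntiOn_of_deriv_neg (convex_Ioi 0)
      (fun τ _ => (g_hasDerivAt x A τ).continuousAt.continuousWithinAt) ?_
    intro τ _
    rw [(g_hasDerivAt x A τ).deriv]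
    exact g_deriv_neg x A hA τ
  · have hc : Tendsto g (nhds 0) (nhds (g 0)) := (g_hasDerivAt x A 0).continuousAt.tendsto
    have hval : g 0 = A * stdNormalCDF x := by simp [hg]
    rw [hval] at hc
    exact hc.mono_left nhdsWithin_le_nhds
  · set C : ℝ := A * ((Real.sqrt (2 * Real.pi))⁻¹ * Real.exp (-x ^ 2 / 2)) with hC
    have hub : ∀ᶠ τ in atTop, g τ ≤ C / (τ - x) := by
      filter_upwards [eventually_ge_atTop (x + 1)] with τ hτ
      have hτx : 0 < τ - x := by linarith
      have hm := (mills (τ - x)).le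
      rw [show -(τ - x) = x - τ by ring] at hm
      have hΦ : stdNormalCDF (x - τ) ≤ stdNormalPDF (x - τ) / (τ - x) :=
        (le_div_iff₀ hτx).mpr (by linarith [hm])
      have h1 : g τ ≤ A * Real.exp (τ ^ 2 / 2 - τ * x) * (stdNormalPDF (x - τ) / (τ - x)) := by
        have : 0 < A * Real.exp (τ ^ 2 / 2 - τ * x) := by positivity
        exact mul_le_mul_of_nonneg_left hΦ this.le
      refine h1.trans_eq ?_
      rw [hC]
      unfold stdNormalPDF
      have hexp : Real.exp (τ ^ 2 / 2 - τ * x) * Real.exp (-(x - τ) ^ 2 / 2)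
          = Real.exp (-x ^ 2 / 2) := by
        rw [← Real.exp_add]; ring_nf
      rw [show A * Real.exp (τ ^ 2 / 2 - τ * x) *
          ((Real.sqrt (2 * Real.pi))⁻¹ * Real.exp (-(x - τ) ^ 2 / 2) / (τ - x)) =
          A * ((Real.sqrt (2 * Real.pi))⁻¹ *
            (Real.exp (τ ^ 2 / 2 - τ * x) * Real.exp (-(x - τ) ^ 2 / 2))) / (τ - x) from by
        ring, hexp]
    have hlb : ∀ᶠ τ in atTop, 0 ≤ g τ := by
      filter_upwards with τ
      have := stdNormalCDF_nonneg (x - τ)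
      have h : (0:ℝ) < A * Real.exp (τ ^ 2 / 2 - τ * x) := by positivity
      exact mul_nonneg h.le this
    have htop : Tendsto (fun τ : ℝ => C / (τ - x)) atTop (nhds 0) := by
      apply Tendsto.div_atTop tendsto_const_nhds
      exact tendsto_atTop_add_const_right _ (-x) tendsto_id |>.congr (fun τ => by simp only [id]; ring)
    exact tendsto_of_tendsto_of_tendsto_of_le_of_le' tendsto_const_nhds htop hlb hub
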